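/- For λ > 0, a ∈ ℝ, and s > λ + |a|, the degenerate Laplace transform of cosh_λ(at) = ((1+λt)^(a/λ) + (1+λt)^(−a/λ))/2 equals (s−λ)/((s−λ)² − a²). -/

import Mathlib

open MeasureTheory Set Filter

/-!
Since `cosh_λ(at)` is the mean of `(1 + λt)^(a/λ)` and `(1 + λt)^(-a/λ)`, the integrand is the
mean of the powers `(1 + λt)^(-(s ∓ a)/λ)`. For `c > 1` the antiderivative
`(1 + λt)^(1-c) / (λ(1-c))` vanishes at infinity, so `∫₀^∞ (1 + λt)^(-c) dt = 1/(λ(c-1))`;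
with `λ(c - 1) = s ∓ a - λ`, which is positive because `s > λ + |a|`, the two integrals are
`1/(s - λ ∓ a)`, whose mean is `(s - λ)/((s - λ)² - a²)`.
-/

lemma Real.rpow_neg_mul_add_rpow_neg {x : ℝ} (hx : 0 < x) (p q : ℝ) :
    x ^ (-p) * ((x ^ q + x ^ (-q)) / 2) = (x ^ (-(p - q)) + x ^ (-(p + q))) / 2 := by
  rw [neg_sub, sub_eq_neg_add, neg_add, Real.rpow_add hx, Real.rpow_add hx]
  ring

section OneAddMulRpow

variable {l c : ℝ}

lemma hasDerivAt_one_add_mul_rpow_div (hl : l ≠ 0) (hc : c ≠ 1) {t : ℝ} (ht : 0 < 1 + l * t) :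
    HasDerivAt (fun t => (1 + l * t) ^ (1 - c) / (l * (1 - c))) ((1 + l * t) ^ (-c)) t := by
  have hlin : HasDerivAt (fun t => 1 + l * t) l t := by
    simpa using ((hasDerivAt_id t).const_mul l).const_add 1
  refine ((hlin.rpow_const (p := 1 - c) (Or.inl ht.ne')).div_const (l * (1 - c))).congr_deriv ?_
  rw [sub_sub_cancel_left]
  field_simp [sub_ne_zero.2 hc.symm]

lemma integral_Ioi_one_add_mul_rpow_neg (hl : 0 < l) (hc : 1 < c) :
    IntegrableOn (fun t => (1 + l * t) ^ (-c)) (Ioi 0) ∧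
      ∫ t in Ioi (0 : ℝ), (1 + l * t) ^ (-c) = 1 / (l * (c - 1)) := by
  set F : ℝ → ℝ := fun t => (1 + l * t) ^ (1 - c) / (l * (1 - c))
  have hpos : ∀ t ∈ Ioi (0 : ℝ), 0 < 1 + l * t := fun t ht => by nlinarith [ht.out]
  have hF' : ∀ t ∈ Ioi (0 : ℝ), HasDerivAt F ((1 + l * t) ^ (-c)) t := fun t ht =>
    hasDerivAt_one_add_mul_rpow_div hl.ne' hc.ne' (hpos t ht)
  have hF0 : ContinuousWithinAt F (Ici 0) 0 :=
    (hasDerivAt_one_add_mul_rpow_div hl.ne' hc.ne' (by simp)).continuousAt.continuousWithinAt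
  have hnonneg : ∀ t ∈ Ioi (0 : ℝ), 0 ≤ (1 + l * t) ^ (-c) := fun t ht =>
    (Real.rpow_pos_of_pos (hpos t ht) _).le
  have hFlim : Tendsto F atTop (nhds 0) := by
    have hbase : Tendsto (fun t : ℝ => 1 + l * t) atTop atTop :=
      tendsto_atTop_add_const_left _ 1 (tendsto_id.const_mul_atTop hl)
    have hpow := (tendsto_rpow_neg_atTop (y := c - 1) (by linarith)).comp hbase
    rw [neg_sub] at hpow
    simpa using hpow.div_const (l * (1 - c))
  refine ⟨integrableOn_Ioi_deriv_of_nonneg hF0 hF' hnonneg hFlim, ?_⟩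
  rw [integral_Ioi_of_hasDerivAt_of_nonneg hF0 hF' hnonneg hFlim]
  simp only [F, mul_zero, add_zero, Real.one_rpow, zero_sub, ← div_neg, neg_mul_eq_mul_neg,
    neg_sub]

end OneAddMulRpow

theorem degLaplace_degCosh (l s a : ℝ) (hl : 0 < l) (hs : l + |a| < s) :
    ∫ t in Ioi (0 : ℝ),
        (1 + l * t) ^ (-(s / l)) *
          (((1 + l * t) ^ (a / l) + (1 + l * t) ^ (-(a / l))) / 2) =
      (s - l) / ((s - l) ^ 2 - a ^ 2) := by
  have hminus : 0 < s - a - l := by linarith [le_abs_self a]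
  have hplus : 0 < s + a - l := by linarith [neg_abs_le a]
  have hc₁ : 1 < s / l - a / l := by rw [← sub_div, one_lt_div hl]; linarith
  have hc₂ : 1 < s / l + a / l := by rw [← add_div, one_lt_div hl]; linarith
  obtain ⟨hint₁, hval₁⟩ := integral_Ioi_one_add_mul_rpow_neg hl hc₁
  obtain ⟨hint₂, hval₂⟩ := integral_Ioi_one_add_mul_rpow_neg hl hc₂
  calc ∫ t in Ioi (0 : ℝ), (1 + l * t) ^ (-(s / l)) *
          (((1 + l * t) ^ (a / l) + (1 + l * t) ^ (-(a / l))) / 2)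
      = ∫ t in Ioi (0 : ℝ),
          ((1 + l * t) ^ (-(s / l - a / l)) + (1 + l * t) ^ (-(s / l + a / l))) / 2 := by
        exact setIntegral_congr_fun measurableSet_Ioi fun t ht =>
          Real.rpow_neg_mul_add_rpow_neg (by nlinarith [ht.out]) _ _
    _ = (1 / (l * (s / l - a / l - 1)) + 1 / (l * (s / l + a / l - 1))) / 2 := by
        rw [integral_div, integral_add hint₁ hint₂, hval₁, hval₂]
    _ = (s - l) / ((s - l) ^ 2 - a ^ 2) := by
        rw [show (s - l) ^ 2 - a ^ 2 = (s - a - l) * (s + a - l) by ring]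
        field_simp
        ring
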